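/- arXiv:1608.01909 — 5 statements merged into one kernel-verified Lean document; each statement's English description precedes it below -/
import Mathlib

section
/- Let q be a prime power with q > n, and let t < n. Then there exists a linear code C ⊆ F_q^n of dimension t+1 whose every nonzero codeword has Hamming weight at least n−t (i.e., C is MDS with parameters [n, t+1, n−t]), together with a vector h ∈ F_q^n, such that for every codeword x ∈ C, every subset S ⊆ {1,…,n} with |S| ≤ t, and every α ∈ F_q, there exists a codeword x' ∈ C with x'_i = x_i for all i ∈ S and h·x'^T = α. (In other words, the scalar product h·x^T is completely undetermined even when t symbols of x are known.) -/
open Polynomial Finset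

/-- Key identity: evaluation at `β` of the Lagrange interpolation over all nodes. -/
lemma key_sum {F : Type} [Field F] [DecidableEq F] {n : ℕ} {a : Fin n → F}
    (ha : Function.Injective a) (β : F) {p : F[X]} (hp : p.degree < (n : ℕ)) :
    ∑ i, eval β (Lagrange.basis Finset.univ a i) * eval (a i) p = eval β p := by
  have hpi := Lagrange.eq_interpolate (s := (Finset.univ : Finset (Fin n)))
    (v := a) (f := p) ha.injOn (by simpa using hp)
  conv_rhs => rw [hpi]
  rw [Lagrange.interpolate_apply, eval_finset_sum]
  refine Finset.sum_congr rfl fun i _ => ?_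
  rw [eval_mul, eval_C, mul_comm]

/-- For a finite field `F` with `n < |F|` and `t < n`, there exists an MDS
code `C` of parameters `[n, t+1, n-t]` and a vector `h` such that the scalar product
`h·x` is completely undetermined even when `t` symbols of a codeword `x` are known. -/
theorem stmt_0 (F : Type) [Field F] [Fintype F] [DecidableEq F]
    (n t : ℕ) (ht : t < n) (hq : n < Fintype.card F) :
    ∃ (C : Submodule F (Fin n → F)) (h : Fin n → F),
      Module.finrank F C = t + 1 ∧
      (∀ x ∈ C, x ≠ 0 → n - t ≤ hammingNorm x) ∧
      (∀ x ∈ C, ∀ S : Finset (Fin n), S.card ≤ t → ∀ α : F,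
        ∃ x' ∈ C, (∀ i ∈ S, x' i = x i) ∧ ∑ i, h i * x' i = α) := by
  -- choose n+1 distinct points
  obtain ⟨e⟩ : Nonempty (Fin (n + 1) ↪ F) := by
    rw [Function.Embedding.nonempty_iff_card_le, Fintype.card_fin]
    omega
  set a : Fin n → F := fun i => e i.castSucc with ha_def
  set β : F := e (Fin.last n) with hβ_def
  have ha : Function.Injective a := fun i j hij => by
    simpa using e.injective hij
  have haβ : ∀ i, a i ≠ β := fun i h => by
    have := e.injective h
    exact (Fin.castSucc_lt_last i).ne this
  -- the evaluation linear map
  set L : Polynomial.degreeLT F (t + 1) →ₗ[F] (Fin n → F) :=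
    (LinearMap.pi fun i => Polynomial.leval (a i)).comp
      (Polynomial.degreeLT F (t + 1)).subtype with hL_def
  have hLapply : ∀ (p : Polynomial.degreeLT F (t + 1)) (i : Fin n),
      L p i = eval (a i) (p : F[X]) := fun p i => rfl
  have hdeg_le : ∀ p : Polynomial.degreeLT F (t + 1), (p : F[X]).degree < (n : ℕ) := by
    intro p
    have := Polynomial.mem_degreeLT.mp p.2
    refine this.trans_le ?_
    exact_mod_cast Nat.succ_le_of_lt ht
  have hLinj : Function.Injective L := by
    rw [← LinearMap.ker_eq_bot, LinearMap.ker_eq_bot']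
    intro p hp
    have hz : ∀ i, eval (a i) (p : F[X]) = 0 := fun i => congrFun hp i
    have hp0 : (p : F[X]) = 0 := by
      by_cases h0 : (p : F[X]) = 0
      · exact h0
      · refine Polynomial.eq_zero_of_natDegree_lt_card_of_eval_eq_zero _ ha hz ?_
        rw [Fintype.card_fin]
        exact (Polynomial.natDegree_lt_iff_degree_lt h0).mpr (hdeg_le p)
    exact Subtype.ext hp0
  refine ⟨LinearMap.range L, fun i => eval β (Lagrange.basis Finset.univ a i), ?_, ?_, ?_⟩
  · rw [LinearMap.finrank_range_of_inj hLinj,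
      (Polynomial.degreeLTEquiv F (t + 1)).finrank_eq, Module.finrank_fin_fun]
  · -- minimum distance
    rintro x ⟨p, rfl⟩ hx0
    have hp0 : (p : F[X]) ≠ 0 := fun h => hx0 (by
      have : p = 0 := Subtype.ext h
      rw [this, map_zero])
    have hnd : (p : F[X]).natDegree ≤ t := by
      have := (Polynomial.natDegree_lt_iff_degree_lt hp0).mpr
        (Polynomial.mem_degreeLT.mp p.2)
      omega
    classical
    set Z : Finset (Fin n) := Finset.univ.filter (fun i => L p i = 0) with hZ
    have hZcard : Z.card ≤ t := by
      have hsub : Z.image a ⊆ (p : F[X]).roots.toFinset := by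
        intro y hy
        obtain ⟨i, hi, rfl⟩ := Finset.mem_image.mp hy
        rw [Multiset.mem_toFinset, Polynomial.mem_roots hp0]
        exact (Finset.mem_filter.mp hi).2
      calc Z.card = (Z.image a).card := (Finset.card_image_of_injective _ ha).symm
        _ ≤ (p : F[X]).roots.toFinset.card := Finset.card_le_card hsub
        _ ≤ Multiset.card (p : F[X]).roots := Multiset.toFinset_card_le _
        _ ≤ (p : F[X]).natDegree := Polynomial.card_roots' _
        _ ≤ t := hnd
    have hsumc : hammingNorm (L p) + Z.card = n := by
      rw [hammingNorm, hZ]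
      have := Finset.card_filter_add_card_filter_not
        (s := (Finset.univ : Finset (Fin n))) (p := fun i => L p i ≠ 0)
      simpa [Finset.filter_not, Finset.card_fin] using this
    omega
  · -- the interpolation property
    rintro x ⟨p, rfl⟩ S hS α
    classical
    set T : Finset (Fin (n + 1)) := S.image Fin.castSucc ∪ {Fin.last n} with hT
    have hlastT : Fin.last n ∈ T := Finset.mem_union_right _ (Finset.mem_singleton_self _)
    have hTcard : T.card ≤ t + 1 := by
      calc T.card ≤ (S.image Fin.castSucc).card + 1 :=
            (Finset.card_union_le _ _).trans (by simp)
        _ ≤ t + 1 := by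
            have := Finset.card_image_le (f := Fin.castSucc) (s := S)
            omega
    set r : Fin (n + 1) → F := fun j =>
      if j = Fin.last n then α else eval (e j) (p : F[X]) with hr
    set p' : F[X] := Lagrange.interpolate T e r with hp'
    have hInj : Set.InjOn e T := e.injective.injOn
    have hdeg' : p'.degree < ((t + 1 : ℕ) : WithBot ℕ) :=
      (Lagrange.degree_interpolate_lt _ hInj).trans_le (by exact_mod_cast hTcard)
    have hmem : p' ∈ Polynomial.degreeLT F (t + 1) := Polynomial.mem_degreeLT.mpr hdeg'
    refine ⟨L ⟨p', hmem⟩, LinearMap.mem_range_self _ _, ?_, ?_⟩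
    · intro i hi
      have hiT : i.castSucc ∈ T :=
        Finset.mem_union_left _ (Finset.mem_image_of_mem _ hi)
      rw [hLapply, hLapply]
      show eval (a i) p' = _
      have : a i = e i.castSucc := rfl
      rw [this, hp', Lagrange.eval_interpolate_at_node r hInj hiT, hr]
      simp only [(Fin.castSucc_lt_last i).ne, if_false]
    · have hdn : p'.degree < (n : ℕ) :=
        hdeg'.trans_le (by exact_mod_cast Nat.succ_le_of_lt ht)
      calc ∑ i, eval β (Lagrange.basis Finset.univ a i) * L ⟨p', hmem⟩ i
          = ∑ i, eval β (Lagrange.basis Finset.univ a i) * eval (a i) p' := rfl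
        _ = eval β p' := key_sum ha β hdn
        _ = r (Fin.last n) := by
            rw [hβ_def, hp', Lagrange.eval_interpolate_at_node r hInj hlastT]
        _ = α := by rw [hr]; simp
end

section
/- Let C ⊆ F_q^n be a linear code whose every nonzero codeword has Hamming weight at least d, given as the kernel of a linear map σ : F_q^n → F_q^r. Let x^(1),…,x^(r) ∈ C, let e^(1),…,e^(r) ∈ F_q^n be vectors such that the union of the supports of e^(1),…,e^(r) has cardinality strictly less than d, and set y^(j) = x^(j) + e^(j) for each j. Let I ⊆ {1,…,r} be such that {σ(y^(i)) : i ∈ I} spans the linear span of {σ(y^(1)),…,σ(y^(r))}. Then for every j ∈ {1,…,r}, the vector e^(j) lies in the linear span of {e^(i) : i ∈ I}, and it is the unique vector w in that span with σ(w) = σ(y^(j)). In particular, if σ(y^(j)) = Σ_{i∈I} λ_i σ(y^(i)), then e^(j) = Σ_{i∈I} λ_i e^(i). -/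
/-- given codewords `x j ∈ ker σ`, errors `e j` whose supports' union has
size `< d`, received words `y j = x j + e j`, and a pseudo-basis index set `I` (the
syndromes `σ (y i)`, `i ∈ I`, span all syndromes), every `e j` lies in the span of
`{e i : i ∈ I}`, is the unique element of that span with syndrome `σ (y j)`, and any
linear decomposition of `σ (y j)` over `I` yields the corresponding decomposition of `e j`. -/
theorem stmt_5 (F : Type) [Field F] [DecidableEq F] (n r d : ℕ)
    (σ : (Fin n → F) →ₗ[F] (Fin r → F))
    (hC : ∀ c ∈ LinearMap.ker σ, c ≠ 0 → d ≤ hammingNorm c)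
    (x e y : Fin r → (Fin n → F))
    (hx : ∀ j, x j ∈ LinearMap.ker σ)
    (hsupp : (Finset.univ.biUnion
      (fun j => Finset.univ.filter (fun i => e j i ≠ 0))).card < d)
    (hy : ∀ j, y j = x j + e j)
    (I : Finset (Fin r))
    (hI : ∀ j, σ (y j) ∈ Submodule.span F ((fun i => σ (y i)) '' (I : Set (Fin r)))) :
    ∀ j, e j ∈ Submodule.span F (e '' (I : Set (Fin r))) ∧
      (∀ w ∈ Submodule.span F (e '' (I : Set (Fin r))), σ w = σ (y j) → w = e j) ∧
      (∀ lam : Fin r → F,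
        σ (y j) = ∑ i ∈ I, lam i • σ (y i) → e j = ∑ i ∈ I, lam i • e i) := by
  -- syndromes of y and e agree
  have hσy : ∀ j, σ (y j) = σ (e j) := by
    intro j
    rw [hy j, map_add]
    have := hx j
    rw [LinearMap.mem_ker] at this
    rw [this, zero_add]
  -- supports of span elements
  have hsupport : ∀ v ∈ Submodule.span F (Set.range e), ∀ i, v i ≠ 0 → ∃ j, e j i ≠ 0 := by
    intro v hv
    induction hv using Submodule.span_induction with
    | mem v hv =>
      obtain ⟨j, rfl⟩ := hv
      exact fun i hi => ⟨j, hi⟩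
    | zero => intro i hi; simp at hi
    | add a b _ _ ha hb =>
      intro i hi
      by_cases h : a i = 0
      · exact hb i (by simpa [Pi.add_apply, h] using hi)
      · exact ha i h
    | smul c a _ ha =>
      intro i hi
      exact ha i (by intro h; apply hi; simp [h])
  -- any span element in the kernel is zero
  have hzero : ∀ v ∈ Submodule.span F (Set.range e), σ v = 0 → v = 0 := by
    intro v hv hσv
    by_contra hne
    have hd : d ≤ hammingNorm v := hC v (LinearMap.mem_ker.mpr hσv) hne
    have hsub : (Finset.univ.filter (fun i => v i ≠ 0)) ⊆
        Finset.univ.biUnion (fun j => Finset.univ.filter (fun i => e j i ≠ 0)) := by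
      intro i hi
      simp only [Finset.mem_filter, Finset.mem_univ, true_and] at hi
      obtain ⟨j, hj⟩ := hsupport v hv i hi
      simp only [Finset.mem_biUnion, Finset.mem_filter, Finset.mem_univ, true_and]
      exact ⟨j, hj⟩
    have : hammingNorm v ≤ (Finset.univ.biUnion
        (fun j => Finset.univ.filter (fun i => e j i ≠ 0))).card := by
      apply Finset.card_le_card
      convert hsub using 2
    omega
  have hspanI : Submodule.span F (e '' (I : Set (Fin r))) ≤ Submodule.span F (Set.range e) :=
    Submodule.span_mono (by rintro _ ⟨i, _, rfl⟩; exact ⟨i, rfl⟩)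
  intro j
  have hej : e j ∈ Submodule.span F (Set.range e) :=
    Submodule.subset_span ⟨j, rfl⟩
  -- uniqueness
  have huniq : ∀ w ∈ Submodule.span F (e '' (I : Set (Fin r))), σ w = σ (y j) → w = e j := by
    intro w hw hσw
    have hmem : w - e j ∈ Submodule.span F (Set.range e) :=
      Submodule.sub_mem _ (hspanI hw) hej
    have : σ (w - e j) = 0 := by
      rw [map_sub, hσw, hσy j, sub_self]
    have := hzero _ hmem this
    exact sub_eq_zero.mp this
  refine ⟨?_, huniq, ?_⟩
  · -- existence via pseudo-basis
    have h1 : σ (y j) ∈ Submodule.map σ (Submodule.span F (e '' (I : Set (Fin r)))) := by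
      rw [Submodule.map_span]
      have : σ '' (e '' (I : Set (Fin r))) = (fun i => σ (y i)) '' (I : Set (Fin r)) := by
        rw [Set.image_image]
        exact Set.image_congr fun i _ => (hσy i).symm
      rw [this]
      exact hI j
    obtain ⟨w, hw, hσw⟩ := h1
    rw [← huniq w hw hσw]
    exact hw
  · intro lam hlam
    have hw : (∑ i ∈ I, lam i • e i) ∈ Submodule.span F (e '' (I : Set (Fin r))) :=
      Submodule.sum_mem _ fun i hi =>
        Submodule.smul_mem _ _ (Submodule.subset_span ⟨i, hi, rfl⟩)
    have hσw : σ (∑ i ∈ I, lam i • e i) = σ (y j) := by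
      rw [map_sum, hlam]
      exact Finset.sum_congr rfl fun i _ => by rw [map_smul, hσy i]
    exact (huniq _ hw hσw).symm
end

section
/- Let C ⊆ F_q^n be a linear code whose every nonzero codeword has Hamming weight at least d, given as the kernel of a linear map σ : F_q^n → F_q^r. Let x^(1),…,x^(r) ∈ C, let e^(1),…,e^(r) ∈ F_q^n be vectors such that the union of the supports of e^(1),…,e^(r) has cardinality strictly less than d, and set y^(j) = x^(j) + e^(j). Then for any subset I ⊆ {1,…,r}, the family {σ(y^(i)) : i ∈ I} is a basis of the span of {σ(y^(1)),…,σ(y^(r))} if and only if the family {e^(i) : i ∈ I} is a basis of the span of {e^(1),…,e^(r)}. -/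
/-- in the pseudo-basis setting, `{σ (y i) : i ∈ I}` is a basis of the span
of all the syndromes `σ (y j)` if and only if `{e i : i ∈ I}` is a basis of the span of
all the errors `e j`. -/
theorem stmt_6 (F : Type) [Field F] [DecidableEq F] (n r d : ℕ)
    (σ : (Fin n → F) →ₗ[F] (Fin r → F))
    (hC : ∀ c ∈ LinearMap.ker σ, c ≠ 0 → d ≤ hammingNorm c)
    (x e y : Fin r → (Fin n → F))
    (hx : ∀ j, x j ∈ LinearMap.ker σ)
    (hsupp : (Finset.univ.biUnion
      (fun j => Finset.univ.filter (fun i => e j i ≠ 0))).card < d)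
    (hy : ∀ j, y j = x j + e j)
    (I : Finset (Fin r)) :
    (LinearIndependent F (fun i : I => σ (y ↑i)) ∧
      Submodule.span F ((fun j => σ (y j)) '' (I : Set (Fin r)))
        = Submodule.span F (Set.range (fun j => σ (y j))))
    ↔ (LinearIndependent F (fun i : I => e ↑i) ∧
      Submodule.span F (e '' (I : Set (Fin r))) = Submodule.span F (Set.range e)) := by
  classical
  set T : Finset (Fin n) :=
    Finset.univ.biUnion (fun j => Finset.univ.filter (fun i => e j i ≠ 0)) with hT
  -- submodule of vectors supported on T
  let W : Submodule F (Fin n → F) :=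
    { carrier := {v | ∀ i, i ∉ T → v i = 0}
      add_mem' := fun ha hb i hi => by simp [ha i hi, hb i hi]
      zero_mem' := fun i _ => rfl
      smul_mem' := fun c v hv i hi => by simp [hv i hi] }
  set S : Submodule F (Fin n → F) := Submodule.span F (Set.range e) with hS
  have hSW : S ≤ W := by
    refine Submodule.span_le.mpr ?_
    rintro _ ⟨j, rfl⟩ i hi
    by_contra h
    exact hi (Finset.mem_biUnion.mpr ⟨j, Finset.mem_univ _, by simpa using h⟩)
  have hinj : ∀ v ∈ S, σ v = 0 → v = 0 := by
    intro v hv hσv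
    by_contra hne
    have hker : v ∈ LinearMap.ker σ := LinearMap.mem_ker.mpr hσv
    have hle : hammingNorm v ≤ T.card := by
      refine Finset.card_le_card ?_
      intro i hi
      simp only [hammingNorm, Finset.mem_filter] at hi
      by_contra h
      exact hi.2 (hSW hv i h)
    have := hC v hker hne
    omega
  have hσy : ∀ j, σ (y j) = σ (e j) := by
    intro j
    rw [hy j, map_add, LinearMap.mem_ker.mp (hx j), zero_add]
  have hcomp : (fun i : I => σ (y ↑i)) = σ ∘ (fun i : I => e ↑i) := by
    funext i; simp [hσy]
  have himg : (fun j => σ (y j)) '' (I : Set (Fin r)) = σ '' (e '' (I : Set (Fin r))) := by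
    rw [Set.image_image]; exact Set.image_congr (fun j _ => hσy j)
  have hrng : Set.range (fun j => σ (y j)) = σ '' (Set.range e) := by
    ext v; simp only [Set.mem_range, Set.mem_image]; constructor
    · rintro ⟨j, rfl⟩; exact ⟨e j, ⟨j, rfl⟩, (hσy j).symm⟩
    · rintro ⟨_, ⟨j, rfl⟩, rfl⟩; exact ⟨j, hσy j⟩
  have hdisj : Disjoint S (LinearMap.ker σ) := by
    rw [Submodule.disjoint_def]
    intro v hv hv'
    exact hinj v hv (LinearMap.mem_ker.mp hv')
  have hsub : Submodule.span F (Set.range (fun i : I => e ↑i)) ≤ S := by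
    refine Submodule.span_le.mpr ?_
    rintro _ ⟨i, rfl⟩
    exact Submodule.subset_span ⟨↑i, rfl⟩
  constructor
  · rintro ⟨hli, hspan⟩
    rw [hcomp] at hli
    refine ⟨hli.of_comp σ, ?_⟩
    rw [himg, hrng, ← Submodule.map_span, ← Submodule.map_span] at hspan
    have hAle : Submodule.span F (e '' (I : Set (Fin r))) ≤ S :=
      Submodule.span_mono (Set.image_subset_range _ _)
    refine le_antisymm (Submodule.span_mono (Set.image_subset_range _ _)) ?_
    intro v hv
    have : σ v ∈ Submodule.map σ (Submodule.span F (e '' (I : Set (Fin r)))) := by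
      rw [hspan]; exact ⟨v, hv, rfl⟩
    obtain ⟨a, ha, haeq⟩ := this
    have hva : v - a ∈ S := Submodule.sub_mem _ hv (hAle ha)
    have : v - a = 0 := hinj _ hva (by rw [map_sub, haeq, sub_self])
    have hva0 : v = a := by linear_combination (norm := abel1) this
    rw [hva0]; exact ha
  · rintro ⟨hli, hspan⟩
    constructor
    · rw [hcomp]
      exact hli.map (Disjoint.mono_left hsub hdisj)
    · rw [himg, hrng, ← Submodule.map_span, ← Submodule.map_span, hspan]
end

section
/- Let F_q be a finite field with q ≥ n + 2, and let e^(1),…,e^(w) ∈ F_q^n be linearly independent vectors. Then the linear span of e^(1),…,e^(w) contains a vector of Hamming weight at least w. -/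
/-- over a finite field with at least `n + 2` elements, the span of `w`
linearly independent vectors of `F^n` contains a vector of Hamming weight at least `w`. -/
theorem stmt_11 (F : Type) [Field F] [Fintype F] [DecidableEq F] (n w : ℕ)
    (hq : n + 2 ≤ Fintype.card F)
    (e : Fin w → (Fin n → F)) (he : LinearIndependent F e) :
    ∃ v ∈ Submodule.span F (Set.range e), w ≤ hammingNorm v := by
  classical
  rcases Nat.eq_zero_or_pos w with hw0 | hw
  · exact ⟨0, Submodule.zero_mem _, by simp [hw0]⟩
  set S : Finset (Fin n) := Finset.univ.filter (fun j => ∃ i, e i j ≠ 0) with hSdef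
  -- restricted family is linearly independent, so w ≤ S.card
  have hwS : w ≤ S.card := by
    have hli : LinearIndependent F (fun i (j : S) => e i (j : Fin n)) := by
      rw [Fintype.linearIndependent_iff]
      intro g hg
      have hzero : ∑ i, g i • e i = 0 := by
        funext j
        by_cases hj : j ∈ S
        · have := congrFun hg ⟨j, hj⟩
          simpa using this
        · have hz : ∀ i, e i j = 0 := by
            intro i
            by_contra h
            exact hj (by simp [hSdef]; exact ⟨i, h⟩)
          simp [hz]
      exact Fintype.linearIndependent_iff.mp he g hzero
    have := hli.fintype_card_le_finrank
    simpa using this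
  have hSn : S.card ≤ n := by
    simpa using S.card_le_univ
  -- count bad coefficient tuples
  set q := Fintype.card F with hqdef
  have hZ : ∀ j ∈ S,
      (Finset.univ.filter (fun c : Fin w → F => ∑ i, c i * e i j = 0)).card ≤ q ^ (w - 1) := by
    intro j hj
    obtain ⟨i0, hi0⟩ : ∃ i, e i j ≠ 0 := by simpa [hSdef] using hj
    have : (Finset.univ.filter (fun c : Fin w → F => ∑ i, c i * e i j = 0)).card
        ≤ (Finset.univ : Finset ({i : Fin w // i ≠ i0} → F)).card := by
      apply Finset.card_le_card_of_injOn (fun c i => c i.1) (fun _ _ => Finset.mem_univ _)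
      intro c hc c' hc' hcc
      simp only [Finset.mem_coe, Finset.mem_filter] at hc hc'
      funext i
      by_cases hii : i = i0
      · subst hii
        have hsub : ∑ k, (c k - c' k) * e k j = 0 := by
          rw [Finset.sum_congr rfl (fun k _ => sub_mul (c k) (c' k) (e k j)),
            Finset.sum_sub_distrib, hc.2, hc'.2, sub_zero]
        have hterm : ∀ k ∈ Finset.univ, k ≠ i → (c k - c' k) * e k j = 0 := by
          intro k _ hk
          have : c k = c' k := congrFun hcc ⟨k, hk⟩
          simp [this]
        rw [Finset.sum_eq_single i (fun k _ hk => hterm k (Finset.mem_univ k) hk)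
          (fun h => absurd (Finset.mem_univ i) h)] at hsub
        have := mul_eq_zero.mp hsub
        rcases this with h | h
        · exact sub_eq_zero.mp h
        · exact absurd h hi0
      · exact congrFun hcc ⟨i, hii⟩
    calc (Finset.univ.filter (fun c : Fin w → F => ∑ i, c i * e i j = 0)).card
        ≤ (Finset.univ : Finset ({i : Fin w // i ≠ i0} → F)).card := this
      _ = q ^ (w - 1) := by
          rw [Finset.card_univ, Fintype.card_fun]
          congr 1
          rw [Fintype.card_subtype_compl]
          simp
  -- union bound
  have hbad : (S.biUnion (fun j => Finset.univ.filter
      (fun c : Fin w → F => ∑ i, c i * e i j = 0))).card < Fintype.card (Fin w → F) := by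
    calc (S.biUnion _).card ≤ ∑ j ∈ S,
        (Finset.univ.filter (fun c : Fin w → F => ∑ i, c i * e i j = 0)).card :=
          Finset.card_biUnion_le
      _ ≤ ∑ _j ∈ S, q ^ (w - 1) := Finset.sum_le_sum hZ
      _ = S.card * q ^ (w - 1) := by rw [Finset.sum_const, smul_eq_mul]
      _ ≤ n * q ^ (w - 1) := Nat.mul_le_mul_right _ hSn
      _ < q * q ^ (w - 1) := by
          have hq' : n < q := by omega
          have hpos : 0 < q ^ (w - 1) := pow_pos (by omega) _
          exact (Nat.mul_lt_mul_right hpos).mpr hq'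
      _ = q ^ w := by
          rw [← pow_succ']
          congr 1
          omega
      _ = Fintype.card (Fin w → F) := by simp [hqdef]
  obtain ⟨c, hc⟩ : ∃ c : Fin w → F, c ∉ S.biUnion (fun j => Finset.univ.filter
      (fun c : Fin w → F => ∑ i, c i * e i j = 0)) := by
    by_contra h
    push_neg at h
    have hsub : (Finset.univ : Finset (Fin w → F)) ⊆ S.biUnion (fun j => Finset.univ.filter
        (fun c : Fin w → F => ∑ i, c i * e i j = 0)) := fun c _ => h c
    have := Finset.card_le_card hsub
    rw [Finset.card_univ] at this
    exact absurd this hbad.not_ge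
  refine ⟨∑ i, c i • e i,
    Submodule.sum_mem _ (fun i _ => Submodule.smul_mem _ _
      (Submodule.subset_span ⟨i, rfl⟩)), ?_⟩
  refine le_trans hwS ?_
  unfold hammingNorm
  apply Finset.card_le_card
  intro j hj
  simp only [Finset.mem_filter, Finset.mem_univ, true_and]
  have hjc : ∑ i, c i * e i j ≠ 0 := by
    intro h
    exact hc (Finset.mem_biUnion.mpr ⟨j, hj, Finset.mem_filter.mpr ⟨Finset.mem_univ _, h⟩⟩)
  simpa using hjc
end

section
/- Let K/F be a field extension and let C ⊆ K^n be a K-linear code, given as the kernel of a K-linear map σ : K^n → K^r, such that every nonzero codeword of C has rank over F at least d. Let x^(1),…,x^(r) ∈ C, let e^(1),…,e^(r) ∈ K^n be vectors such that every element of the K-linear span of {e^(1),…,e^(r)} has rank over F at most d−1, and set y^(j) = x^(j) + e^(j) for each j. Let I ⊆ {1,…,r} be such that {σ(y^(i)) : i ∈ I} spans the K-linear span of {σ(y^(1)),…,σ(y^(r))}. Then for every j, the vector e^(j) lies in the K-linear span of {e^(i) : i ∈ I} and is the unique vector w in that span with σ(w) = σ(y^(j)); in particular, if σ(y^(j)) =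 Σ_{i∈I} λ_i σ(y^(i)) then e^(j) = Σ_{i∈I} λ_i e^(i). -/
/-- The rank over `F` of a vector `x ∈ K^n`: the dimension over `F` of the `F`-linear
span in `K` of the coordinates of `x`. -/
noncomputable def rankOver (F : Type*) {K : Type*} [Field F] [Field K] [Algebra F K]
    {n : ℕ} (x : Fin n → K) : ℕ :=
  Module.finrank F (Submodule.span F (Set.range x))

/-- rank-metric analogue of the pseudo-basis property: given codewords
`x j ∈ ker σ`, errors `e j` whose `K`-span has all elements of rank over `F` at most
`d - 1`, `y j = x j + e j`, and `I` such that `{σ (y i) : i ∈ I}` spans all syndromes,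
each `e j` lies in the `K`-span of `{e i : i ∈ I}`, is the unique element there with
syndrome `σ (y j)`, and linear decompositions of syndromes carry over to the errors. -/
theorem stmt_15 (F K : Type) [Field F] [Field K] [Algebra F K] (n r d : ℕ)
    (σ : (Fin n → K) →ₗ[K] (Fin r → K))
    (hC : ∀ c ∈ LinearMap.ker σ, c ≠ 0 → d ≤ rankOver F c)
    (x e y : Fin r → (Fin n → K))
    (hx : ∀ j, x j ∈ LinearMap.ker σ)
    (hrk : ∀ v ∈ Submodule.span K (Set.range e), rankOver F v ≤ d - 1)
    (hy : ∀ j, y j = x j + e j)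
    (I : Finset (Fin r))
    (hI : ∀ j, σ (y j) ∈ Submodule.span K ((fun i => σ (y i)) '' (I : Set (Fin r)))) :
    ∀ j, e j ∈ Submodule.span K (e '' (I : Set (Fin r))) ∧
      (∀ w ∈ Submodule.span K (e '' (I : Set (Fin r))), σ w = σ (y j) → w = e j) ∧
      (∀ lam : Fin r → K,
        σ (y j) = ∑ i ∈ I, lam i • σ (y i) → e j = ∑ i ∈ I, lam i • e i) := by
  have hσy : ∀ j, σ (y j) = σ (e j) := by
    intro j
    rw [hy, map_add, LinearMap.mem_ker.mp (hx j), zero_add]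
  have hsub : Submodule.span K (e '' (I : Set (Fin r))) ≤ Submodule.span K (Set.range e) :=
    Submodule.span_mono (Set.image_subset_range _ _)
  have hzero : ∀ v ∈ Submodule.span K (Set.range e), σ v = 0 → v = 0 := by
    intro v hv hσv
    by_contra hne
    have h1 : d ≤ rankOver F v := hC v (LinearMap.mem_ker.mpr hσv) hne
    have h2 : rankOver F v ≤ d - 1 := hrk v hv
    have h3 : 0 < rankOver F v := by
      unfold rankOver
      have : FiniteDimensional F (Submodule.span F (Set.range v)) :=
        FiniteDimensional.span_of_finite F (Set.finite_range v)
      obtain ⟨i, hi⟩ := Function.ne_iff.mp hne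
      have hnb : Submodule.span F (Set.range v) ≠ ⊥ := by
        intro hb
        have : v i ∈ Submodule.span F (Set.range v) :=
          Submodule.subset_span (Set.mem_range_self i)
        rw [hb, Submodule.mem_bot] at this
        exact hi this
      have : Nontrivial (Submodule.span F (Set.range v)) :=
        Submodule.nontrivial_iff_ne_bot.mpr hnb
      exact Module.finrank_pos
    omega
  have key : ∀ j, e j ∈ Submodule.span K (e '' (I : Set (Fin r))) := by
    intro j
    have h1 : σ (e j) ∈ Submodule.map σ (Submodule.span K (e '' (I : Set (Fin r)))) := by
      rw [← Submodule.span_image]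
      have himg : (fun i => σ (y i)) '' (I : Set (Fin r)) = σ '' (e '' (I : Set (Fin r))) := by
        rw [Set.image_image]
        exact Set.image_congr fun i _ => hσy i
      have := hI j
      rw [himg] at this
      rwa [← hσy j]
    obtain ⟨w, hw, hσw⟩ := h1
    have : e j - w = 0 := by
      apply hzero
      · exact Submodule.sub_mem _ (Submodule.subset_span (Set.mem_range_self j)) (hsub hw)
      · rw [map_sub, hσw, sub_self]
    have : e j = w := by linear_combination (norm := abel) this
    rw [this]; exact hw
  intro j
  refine ⟨key j, ?_, ?_⟩
  · intro w hw hσw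
    have : w - e j = 0 := by
      apply hzero
      · exact Submodule.sub_mem _ (hsub hw) (Submodule.subset_span (Set.mem_range_self j))
      · rw [map_sub, hσw, hσy j, sub_self]
    linear_combination (norm := abel) this
  · intro lam hlam
    have hw : (∑ i ∈ I, lam i • e i) ∈ Submodule.span K (e '' (I : Set (Fin r))) :=
      Submodule.sum_mem _ fun i hi => Submodule.smul_mem _ _
        (Submodule.subset_span (Set.mem_image_of_mem _ hi))
    have hσw : σ (∑ i ∈ I, lam i • e i) = σ (y j) := by
      rw [map_sum, hlam]
      exact Finset.sum_congr rfl fun i _ => by rw [map_smul, hσy i]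
    have : (∑ i ∈ I, lam i • e i) - e j = 0 := by
      apply hzero
      · exact Submodule.sub_mem _ (hsub hw) (Submodule.subset_span (Set.mem_range_self j))
      · rw [map_sub, hσw, hσy j, sub_self]
    have h := sub_eq_zero.mp this
    exact h.symm
end
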